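/- For a random variable Y with E|Y| < ∞, the map τ ↦ μ_τ(Y) from (0,1) to ℝ, where μ_τ(Y) is the unique solution of E[I_τ(x,Y)] = 0, is strictly increasing whenever Y is non-degenerate. -/

import Mathlib

open MeasureTheory Filter Set Asymptotics

noncomputable def ident (τ x y : ℝ) : ℝ :=
  if x ≤ y then τ * (y - x) else -((1 - τ) * (x - y))

noncomputable def score (τ x y : ℝ) : ℝ :=
  τ / 2 * ((max (y - x) 0) ^ 2 - (max y 0) ^ 2) +
    (1 - τ) / 2 * ((max (x - y) 0) ^ 2 - (max (-y) 0) ^ 2)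

/-!
Writing `ident τ x y = τ |y - x| - (x - y)⁺`, the map `τ ↦ E[ident τ x Y]` is affine with slope
`E|Y - x|`, which is positive when `Y` is non-degenerate, while `x ↦ E[ident τ x Y]` is
antitone for `τ ∈ [0, 1]`.
-/

lemma ident_eq_mul_abs_sub_sub_max (τ x y : ℝ) : ident τ x y = τ * |y - x| - max (x - y) 0 := by
  unfold ident
  split_ifs with h
  · rw [abs_of_nonneg (by linarith), max_eq_right (by linarith)]; ring
  · rw [abs_of_neg (by linarith), max_eq_left (by linarith)]; ring

lemma ident_antitone_left {τ : ℝ} (h0 : 0 ≤ τ) (h1 : τ ≤ 1) (y : ℝ) :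
    Antitone fun x => ident τ x y := by
  intro x' x h
  dsimp only [ident]
  split_ifs <;> nlinarith

section Integral

variable {Ω : Type*} [MeasurableSpace Ω] {P : Measure Ω} [IsFiniteMeasure P] {Y : Ω → ℝ}

lemma integrable_abs_sub_const (hY : Integrable Y P) (x : ℝ) :
    Integrable (fun ω => |Y ω - x|) P :=
  (hY.sub (integrable_const x)).abs

lemma integrable_max_const_sub (hY : Integrable Y P) (x : ℝ) :
    Integrable (fun ω => max (x - Y ω) 0) P :=
  ((integrable_const x).sub hY).pos_part

lemma integrable_ident (hY : Integrable Y P) (τ x : ℝ) :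
    Integrable (fun ω => ident τ x (Y ω)) P := by
  simp only [ident_eq_mul_abs_sub_sub_max]
  exact ((integrable_abs_sub_const hY x).const_mul τ).sub (integrable_max_const_sub hY x)

lemma integral_ident (hY : Integrable Y P) (τ x : ℝ) :
    ∫ ω, ident τ x (Y ω) ∂P = τ * ∫ ω, |Y ω - x| ∂P - ∫ ω, max (x - Y ω) 0 ∂P := by
  simp only [ident_eq_mul_abs_sub_sub_max]
  rw [integral_sub ((integrable_abs_sub_const hY x).const_mul τ)
    (integrable_max_const_sub hY x), integral_const_mul]

lemma integral_abs_sub_pos (hY : Integrable Y P) (hnd : ¬ ∃ c : ℝ, ∀ᵐ ω ∂P, Y ω = c) (x : ℝ) :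
    0 < ∫ ω, |Y ω - x| ∂P := by
  refine (integral_nonneg fun ω => abs_nonneg _).lt_of_ne fun h => hnd ⟨x, ?_⟩
  have hzero := (integral_eq_zero_iff_of_nonneg (fun ω => abs_nonneg (Y ω - x))
    (integrable_abs_sub_const hY x)).1 h.symm
  filter_upwards [hzero] with ω hω
  exact sub_eq_zero.1 (abs_eq_zero.1 hω)

lemma strictMono_integral_ident (hY : Integrable Y P) (hnd : ¬ ∃ c : ℝ, ∀ᵐ ω ∂P, Y ω = c)
    (x : ℝ) : StrictMono fun τ => ∫ ω, ident τ x (Y ω) ∂P := by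
  intro τ τ' h
  simp only [integral_ident hY]
  nlinarith [integral_abs_sub_pos hY hnd x]

lemma antitone_integral_ident (hY : Integrable Y P) {τ : ℝ} (h0 : 0 ≤ τ) (h1 : τ ≤ 1) :
    Antitone fun x => ∫ ω, ident τ x (Y ω) ∂P :=
  fun _ _ h => integral_mono (integrable_ident hY τ _) (integrable_ident hY τ _)
    fun ω => ident_antitone_left h0 h1 (Y ω) h

end Integral

theorem expectile_strictMono_in_tau_general
    {Ω : Type*} [MeasurableSpace Ω] (P : Measure Ω) [IsProbabilityMeasure P]
    (Y : Ω → ℝ) (hY : Integrable Y P)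
    (hnd : ¬ ∃ c : ℝ, ∀ᵐ ω ∂P, Y ω = c)
    (τ₁ τ₂ : ℝ) (hτ₂ : τ₂ ∈ Set.Ioo (0:ℝ) 1)
    (hlt : τ₁ < τ₂) (μ₁ μ₂ : ℝ)
    (hμ₁ : ∫ ω, ident τ₁ μ₁ (Y ω) ∂P = 0)
    (hμ₂ : ∫ ω, ident τ₂ μ₂ (Y ω) ∂P = 0) :
    μ₁ < μ₂ := by
  by_contra! hle
  have := calc
    0 = ∫ ω, ident τ₁ μ₁ (Y ω) ∂P := hμ₁.symm
    _ < ∫ ω, ident τ₂ μ₁ (Y ω) ∂P := strictMono_integral_ident hY hnd μ₁ hlt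
    _ ≤ ∫ ω, ident τ₂ μ₂ (Y ω) ∂P := antitone_integral_ident hY hτ₂.1.le hτ₂.2.le hle
    _ = 0 := hμ₂
  exact lt_irrefl 0 this

theorem expectile_strictMono_in_tau
    {Ω : Type*} [MeasurableSpace Ω] (P : Measure Ω) [IsProbabilityMeasure P]
    (Y : Ω → ℝ) (hY : Integrable Y P)
    (hnd : ¬ ∃ c : ℝ, ∀ᵐ ω ∂P, Y ω = c)
    (τ₁ τ₂ : ℝ) (hτ₁ : τ₁ ∈ Set.Ioo (0:ℝ) 1) (hτ₂ : τ₂ ∈ Set.Ioo (0:ℝ) 1)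
    (hlt : τ₁ < τ₂) (μ₁ μ₂ : ℝ)
    (hμ₁ : ∫ ω, ident τ₁ μ₁ (Y ω) ∂P = 0)
    (hμ₂ : ∫ ω, ident τ₂ μ₂ (Y ω) ∂P = 0) :
    μ₁ < μ₂ :=
  expectile_strictMono_in_tau_general P Y hY hnd τ₁ τ₂ hτ₂ hlt μ₁ μ₂ hμ₁ hμ₂
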